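/- Fix k ≥ 2 and let M ⊆ ℕ with 1 ∈ M. Let T_M be the subsemigroup of ℕ^k generated by {(1,...,1,m) : m ∈ M}. Then T_M is a subdirect product of ℕ^k (it contains the diagonal {(n,...,n) : n ∈ ℕ} and projects onto every coordinate), and T_M is isomorphic to S_M via the map (n,...,n,p) ↦ (n,p). -/

import Mathlib

/-- `SM M` is the subsemigroup of `ℕ × ℕ` generated by `{(1, m) : m ∈ M}`. -/
def SM (M : Set ℕ+) : AddSubsemigroup (ℕ+ × ℕ+) :=
  AddSubsemigroup.closure {p : ℕ+ × ℕ+ | ∃ m ∈ M, p = (1, m)}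

/-- `TM k M` is the subsemigroup of `ℕ^k` generated by the elements
`(1, …, 1, m)` for `m ∈ M`. -/
def TM (k : ℕ) (M : Set ℕ+) : AddSubsemigroup (Fin k → ℕ+) :=
  AddSubsemigroup.closure
    {v : Fin k → ℕ+ | ∃ m ∈ M, v = fun i : Fin k => if (i : ℕ) = k - 1 then m else 1}

/-!
`T_M` is the image of `S_M` under the additive map `(a, b) ↦ (a, …, a, b)`, because this map
sends the generators `(1, m)` of `S_M` to the generators `(1, …, 1, m)` of `T_M`. For `k ≥ 2`
the map is injective, so it restricts to an isomorphism `S_M ≃ T_M`, whose inverse reads off the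
first and last coordinates. Since `1 ∈ M`, `S_M` contains every `(n, n)`, whose image is the
diagonal vector `(n, …, n)`.
-/

section SpreadLast

variable {α : Type*} [Add α] (k : ℕ)

/-- `(a, b) ↦ (a, …, a, b)`. -/
def spreadLast : α × α →ₙ+ (Fin k → α) where
  toFun p i := if (i : ℕ) = k - 1 then p.2 else p.1
  map_add' p q := by funext i; simp only [Pi.add_apply]; split_ifs <;> rfl

variable {k}

theorem spreadLast_apply_of_ne (p : α × α) {i : Fin k} (hi : (i : ℕ) ≠ k - 1) :
    spreadLast k p i = p.1 :=
  if_neg hi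

theorem spreadLast_apply_of_eq (p : α × α) {i : Fin k} (hi : (i : ℕ) = k - 1) :
    spreadLast k p i = p.2 :=
  if_pos hi

theorem spreadLast_injective (hk : 2 ≤ k) : Function.Injective (spreadLast (α := α) k) := by
  intro p q h
  have hfirst := congrFun h ⟨0, by omega⟩
  have hlast := congrFun h ⟨k - 1, by omega⟩
  rw [spreadLast_apply_of_ne p (by simp only; omega),
    spreadLast_apply_of_ne q (by simp only; omega)] at hfirst
  rw [spreadLast_apply_of_eq p rfl, spreadLast_apply_of_eq q rfl] at hlast
  exact Prod.ext hfirst hlast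

theorem spreadLast_diag (a : α) : spreadLast k (a, a) = fun _ => a := by
  funext i; exact ite_self a

end SpreadLast

theorem TM_eq_map_SM (k : ℕ) (M : Set ℕ+) : TM k M = (SM M).map (spreadLast k) := by
  rw [SM, AddHom.map_mclosure, TM]
  congr 1
  ext v
  simp only [Set.mem_ofPred_eq, Set.mem_image]
  constructor
  · rintro ⟨m, hm, rfl⟩
    exact ⟨(1, m), ⟨m, hm, rfl⟩, rfl⟩
  · rintro ⟨_, ⟨m, hm, rfl⟩, rfl⟩
    exact ⟨m, hm, rfl⟩

theorem diag_mem_SM {M : Set ℕ+} (h1 : 1 ∈ M) (n : ℕ+) : (n, n) ∈ SM M := by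
  induction n using PNat.recOn with
  | one => exact AddSubsemigroup.subset_closure ⟨1, h1, rfl⟩
  | succ n ih => exact add_mem ih (AddSubsemigroup.subset_closure ⟨1, h1, rfl⟩)

theorem diag_mem_TM (k : ℕ) {M : Set ℕ+} (h1 : 1 ∈ M) (n : ℕ+) :
    (fun _ => n : Fin k → ℕ+) ∈ TM k M := by
  rw [TM_eq_map_SM]
  exact ⟨(n, n), diag_mem_SM h1 n, spreadLast_diag n⟩

noncomputable def TMEquivSM {k : ℕ} (hk : 2 ≤ k) (M : Set ℕ+) : TM k M ≃+ SM M :=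
  ((SM M).equivMapOfInjective _ (spreadLast_injective hk) |>.trans
    (AddEquiv.subsemigroupCongr (TM_eq_map_SM k M).symm)).symm

theorem spreadLast_TMEquivSM {k : ℕ} (hk : 2 ≤ k) (M : Set ℕ+) (v : TM k M) :
    spreadLast k (TMEquivSM hk M v : ℕ+ × ℕ+) = v := by
  conv_rhs => rw [← (TMEquivSM hk M).symm_apply_apply v]
  exact ((SM M).coe_equivMapOfInjective_apply _ (spreadLast_injective hk) _).symm

/-- For `k ≥ 2` and `1 ∈ M ⊆ ℕ`, the subsemigroup `T_M ≤ ℕ^k` contains the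
diagonal, is a subdirect product (projects onto every coordinate), and is
isomorphic to `S_M` via `(n, …, n, p) ↦ (n, p)`. -/
theorem TM_subdirect_and_iso_SM (k : ℕ) (hk : 2 ≤ k) (M : Set ℕ+) (h1 : 1 ∈ M) :
    (∀ n : ℕ+, (fun _ => n : Fin k → ℕ+) ∈ TM k M) ∧
    (∀ i : Fin k, ∀ n : ℕ+, ∃ v ∈ TM k M, v i = n) ∧
    ∃ φ : TM k M ≃+ SM M,
      ∀ v : TM k M,
        (φ v : ℕ+ × ℕ+) =
          ((v : Fin k → ℕ+) ⟨0, by omega⟩, (v : Fin k → ℕ+) ⟨k - 1, by omega⟩) := by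
  refine ⟨diag_mem_TM k h1, fun _ n => ⟨_, diag_mem_TM k h1 n, rfl⟩, TMEquivSM hk M, fun v => ?_⟩
  rw [← spreadLast_TMEquivSM hk M v, spreadLast_apply_of_ne _ (by simp only; omega),
    spreadLast_apply_of_eq _ rfl]
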